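/- The 14-node reduced NSCLC Boolean network under synchronous update has exactly three fixed points, whose restrictions to the coordinates (miR145, Sp1, MALAT1, BMI1, KLF4, p53, p53A, p53K, E2F1) coincide with the three fixed points of the 9-node network; in each fixed point the remaining coordinates are determined as: BAX = (\neg BCL2 \vee \neg KLF4) \wedge \neg p53K, PUMA = p53K, BCL2 = \neg PUMA \wedge \neg miR145, p21 = p53A \vee (\neg BMI1 \wedge \neg Caspase3), Caspase3 = (\neg BCL2 \vee \neg p21) \wedge BAX. -/
import Mathlib


/-- A state of the 14-node reduced NSCLC Boolean network. -/
structure S14 where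
  miR145 : Bool
  Sp1 : Bool
  MALAT1 : Bool
  BMI1 : Bool
  KLF4 : Bool
  p53 : Bool
  p53A : Bool
  p53K : Bool
  BAX : Bool
  E2F1 : Bool
  Caspase3 : Bool
  p21 : Bool
  BCL2 : Bool
  PUMA : Bool
deriving DecidableEq, Repr

/-- Synchronous map of the 14-node reduced NSCLC Boolean network. -/
def F14 (x : S14) : S14 where
  miR145 := x.p53 && !x.MALAT1 && !x.BMI1
  Sp1 := x.BMI1 || !x.miR145
  MALAT1 := x.Sp1
  BMI1 := x.E2F1
  KLF4 := !x.miR145 || (x.E2F1 && x.p53)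
  p53 := !x.KLF4 || !x.MALAT1
  p53A := !x.p53K && x.p53
  p53K := !x.p53A && x.p53
  BAX := (!x.BCL2 || !x.KLF4) && !x.p53K
  E2F1 := x.MALAT1
  Caspase3 := (!x.BCL2 || !x.p21) && x.BAX
  p21 := x.p53A || (!x.BMI1 && !x.Caspase3)
  BCL2 := !x.PUMA && !x.miR145
  PUMA := x.p53K

/-- Restriction of a 14-node state to the coordinates of the 9-node network. -/
def proj9 (x : S14) :
    Bool × Bool × Bool × Bool × Bool × Bool × Bool × Bool × Bool :=
  (x.miR145, x.Sp1, x.MALAT1, x.BMI1, x.KLF4, x.p53, x.p53A, x.p53K, x.E2F1)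

/-- First fixed point: (0,1,1,1,1,0,0,0,0,1,0,0,1,0). -/
def q1 : S14 :=
  ⟨false, true, true, true, true, false, false, false, false, true, false, false,
    true, false⟩

/-- Second fixed point: (1,0,0,0,0,1,0,1,0,0,0,1,0,1). -/
def q2 : S14 :=
  ⟨true, false, false, false, false, true, false, true, false, false, false, true,
    false, true⟩

/-- Third fixed point: (1,0,0,0,0,1,1,0,1,0,1,1,0,0). -/
def q3 : S14 :=
  ⟨true, false, false, false, false, true, true, false, true, false, true, true,
    false, false⟩


def S14.equiv : S14 ≃ (Bool × Bool × Bool × Bool × Bool × Bool × Bool × Bool ×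
    Bool × Bool × Bool × Bool × Bool × Bool) where
  toFun x := (x.1, x.2, x.3, x.4, x.5, x.6, x.7, x.8, x.9, x.10, x.11, x.12, x.13, x.14)
  invFun p := ⟨p.1, p.2.1, p.2.2.1, p.2.2.2.1, p.2.2.2.2.1, p.2.2.2.2.2.1,
    p.2.2.2.2.2.2.1, p.2.2.2.2.2.2.2.1, p.2.2.2.2.2.2.2.2.1, p.2.2.2.2.2.2.2.2.2.1,
    p.2.2.2.2.2.2.2.2.2.2.1, p.2.2.2.2.2.2.2.2.2.2.2.1, p.2.2.2.2.2.2.2.2.2.2.2.2.1,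
    p.2.2.2.2.2.2.2.2.2.2.2.2.2⟩
  left_inv x := rfl
  right_inv p := rfl

instance : Fintype S14 := Fintype.ofEquiv _ S14.equiv.symm


lemma key (x : S14) : F14 x = x ↔ x = q1 ∨ x = q2 ∨ x = q3 := by
  constructor
  · intro hx
    obtain ⟨a,b,c,d,e,f,g,h,i,j,k,l,m,n⟩ := x
    simp only [F14, S14.mk.injEq] at hx
    obtain ⟨h1,h2,h3,h4,h5,h6,h7,h8,h9,h10,h11,h12,h13,h14⟩ := hx
    simp only [q1, q2, q3, S14.mk.injEq]
    subst h3 h4 h10 h14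
    cases a <;> cases b <;> cases e <;> cases f <;> cases g <;> cases h <;>
      simp_all
  · rintro (rfl | rfl | rfl) <;> rfl

/-- The 14-node network has exactly three fixed points, whose restrictions to the
nine coordinates coincide with the three fixed points of the 9-node network; in
each fixed point the remaining coordinates are determined by the stated relations. -/
theorem fourteen_node_fixed_points :
    (∀ x : S14, F14 x = x ↔ x = q1 ∨ x = q2 ∨ x = q3) ∧
    (proj9 q1 = (false, true, true, true, true, false, false, false, true) ∧
     proj9 q2 = (true, false, false, false, false, true, false, true, false) ∧
     proj9 q3 = (true, false, false, false, false, true, true, false, false)) ∧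
    (∀ x : S14, F14 x = x →
      (x.BAX = ((!x.BCL2 || !x.KLF4) && !x.p53K) ∧
       x.PUMA = x.p53K ∧
       x.BCL2 = (!x.PUMA && !x.miR145) ∧
       x.p21 = (x.p53A || (!x.BMI1 && !x.Caspase3)) ∧
       x.Caspase3 = ((!x.BCL2 || !x.p21) && x.BAX))) := by
  refine ⟨key, ⟨rfl, rfl, rfl⟩, fun x hx => ?_⟩
  rcases (key x).mp hx with rfl | rfl | rfl <;> exact ⟨rfl, rfl, rfl, rfl, rfl⟩
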